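/- arXiv:2210.14168 — 2 statements merged into one kernel-verified Lean document; each statement's English description precedes it below -/
import Mathlib

section
/- Let $R$ be a commutative ring, $L$ a Lie algebra over $R$, and $l \geq 1$ an integer. Suppose $\theta$ is a family of elements $\theta_{j,i} \in L$ indexed by pairs $0 \leq i < j \leq l$ such that for all $0 \leq i < j < h \leq l$ one has $[\theta_{h,j}, \theta_{j,i}] = \theta_{h,i}$, and suppose moreover that $\theta_{l,0} \neq 0$. Then the $(l-1)$-st term of the lower central series of $L$ is nonzero; in particular $L$ is not nilpotent of nilpotency class strictly less than $l$. -/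
/-- If `θ j i` (for `0 ≤ i < j ≤ l`) satisfy `⁅θ h j, θ j i⁆ = θ h i` and `θ l 0 ≠ 0`, then the
`(l-1)`-st term of the lower central series of `L` is nonzero; in particular no term
`γ_n(L)` with `n < l` vanishes, so `L` is not nilpotent of nilpotency class `< l`. -/
theorem stmt2 (R : Type*) (L : Type*) [CommRing R] [LieRing L] [LieAlgebra R L]
    (l : ℕ) (hl : 1 ≤ l) (θ : ℕ → ℕ → L)
    (hθ : ∀ i j h : ℕ, i < j → j < h → h ≤ l → ⁅θ h j, θ j i⁆ = θ h i)
    (hne : θ l 0 ≠ 0) :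
    LieModule.lowerCentralSeries R L L (l - 1) ≠ ⊥ ∧
      ∀ n : ℕ, n < l → LieModule.lowerCentralSeries R L L n ≠ ⊥ := by
  have key : ∀ j, 1 ≤ j → j ≤ l → θ j 0 ∈ LieModule.lowerCentralSeries R L L (j - 1) := by
    intro j
    induction j with
    | zero => omega
    | succ k ih =>
      intro _ hk
      rcases Nat.eq_or_lt_of_le (Nat.one_le_iff_ne_zero.mpr (by omega) : 1 ≤ k + 1) with h1 | h1
      · simp [← h1]
      · have hk1 : 1 ≤ k := by omega
        have hmem := ih hk1 (by omega)
        have heq := hθ 0 k (k + 1) (by omega) (by omega) hk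
        have : θ (k + 1) 0 ∈ LieModule.lowerCentralSeries R L L (k - 1 + 1) := by
          rw [LieModule.lowerCentralSeries_succ, ← heq]
          exact LieSubmodule.lie_mem_lie (LieSubmodule.mem_top _) hmem
        have he : k + 1 - 1 = k - 1 + 1 := by omega
        rwa [he]
  have h1 : LieModule.lowerCentralSeries R L L (l - 1) ≠ ⊥ := by
    intro hb
    exact hne ((LieSubmodule.mem_bot _).mp (hb ▸ key l hl le_rfl))
  refine ⟨h1, fun n hn hb => h1 ?_⟩
  rw [eq_bot_iff] at hb ⊢
  exact le_trans (LieModule.antitone_lowerCentralSeries R L L (by omega : n ≤ l - 1)) hb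
end

section
/- Let $l \geq 1$ and let $A = \mathbb{Q}[X_0, X_1, \ldots, X_l]$. Define $P_0 = 1$ and $P_i = X_i$ for $1 \leq i \leq l$, and for $0 \leq i < j \leq l$ let $\theta_{j,i}$ be the derivation of $A$ with $\theta_{j,i}(X_j) = P_i$ and $\theta_{j,i}(X_k) = 0$ for $k \neq j$. Then the right-nested iterated commutator bracket satisfies $[\theta_{1,0}, [\theta_{2,1}, [\cdots, [\theta_{l-1,l-2}, \theta_{l,l-1}]\cdots]]] = \theta_{l,0}$, and this element is a nonzero derivation of $A$ (since it sends $X_l$ to $1$). -/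
open MvPolynomial

/-- `P 0 = 1` and `P i = Xᵢ` for `i ≥ 1`, in `ℚ[X₀, …, X_l]`. -/
noncomputable def Pgen (l : ℕ) (i : Fin (l + 1)) : MvPolynomial (Fin (l + 1)) ℚ :=
  if i = 0 then 1 else X i

/-- The derivation of `ℚ[X₀, …, X_l]` sending `X_j` to `P i` and every other variable to `0`. -/
noncomputable def theta (l : ℕ) (j i : Fin (l + 1)) :
    Derivation ℚ (MvPolynomial (Fin (l + 1)) ℚ) (MvPolynomial (Fin (l + 1)) ℚ) :=
  mkDerivation ℚ (fun k => if k = j then Pgen l i else 0)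

/-- The right-nested iterated bracket `⁅x k, ⁅x (k-1), ⋯, ⁅x 1, x 0⁆ ⋯⁆⁆`. -/
def rightNestedBracket {L : Type*} [LieRing L] (x : ℕ → L) : ℕ → L
  | 0 => x 0
  | k + 1 => ⁅x (k + 1), rightNestedBracket x k⁆

lemma theta_X (l : ℕ) (j i k : Fin (l + 1)) :
    theta l j i (X k) = if k = j then Pgen l i else 0 := by
  simp [theta, mkDerivation_X]

lemma theta_P (l : ℕ) (j i m : Fin (l + 1)) :
    theta l j i (Pgen l m) = if m = 0 then 0 else if m = j then Pgen l i else 0 := by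
  unfold Pgen
  split
  · simp_all [Derivation.map_one_eq_zero]
  · simp_all [theta_X, Pgen]

lemma bracket_theta (l j i : ℕ) (hj : 1 ≤ j) (hjl : j < l) (hij : i < j) :
    ⁅theta l ⟨j, by omega⟩ ⟨i, by omega⟩, theta l ⟨l, by omega⟩ ⟨j, by omega⟩⁆
      = theta l ⟨l, by omega⟩ ⟨i, by omega⟩ := by
  apply derivation_ext
  intro k
  rw [Derivation.commutator_apply, theta_X, theta_X, theta_X]
  by_cases hk : k = (⟨l, by omega⟩ : Fin (l + 1))
  · have hkj : k ≠ (⟨j, by omega⟩ : Fin (l + 1)) := by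
      subst hk; intro h; rw [Fin.mk.injEq] at h; omega
    rw [if_pos hk, if_pos hk, if_neg hkj, map_zero, sub_zero, theta_P]
    have h1 : (⟨j, by omega⟩ : Fin (l + 1)) ≠ 0 := by
      intro h; rw [Fin.ext_iff] at h; simp at h; omega
    rw [if_neg h1, if_pos rfl]
  · rw [if_neg hk, if_neg hk, map_zero, zero_sub, neg_eq_zero]
    by_cases hkj : k = (⟨j, by omega⟩ : Fin (l + 1))
    · rw [if_pos hkj, theta_P]
      by_cases hi0 : (⟨i, by omega⟩ : Fin (l + 1)) = 0
      · rw [if_pos hi0]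
      · rw [if_neg hi0, if_neg]
        intro h; rw [Fin.mk.injEq] at h; omega
    · rw [if_neg hkj, map_zero]

lemma key (l : ℕ) (hl : 1 ≤ l) (k : ℕ) (hk : k ≤ l - 1) :
    rightNestedBracket
        (fun m => theta l ⟨l - m, by omega⟩ ⟨l - m - 1, by omega⟩) k
      = theta l ⟨l, by omega⟩ ⟨l - 1 - k, by omega⟩ := by
  induction k with
  | zero =>
    simp only [rightNestedBracket]
    congr 1
  | succ k ih =>
    rw [rightNestedBracket, ih (by omega)]
    have h1 : (⟨l - (k + 1), by omega⟩ : Fin (l + 1)) = ⟨l - 1 - k, by omega⟩ :=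
      Fin.ext (by simp; omega)
    have h2 : (⟨l - (k + 1) - 1, by omega⟩ : Fin (l + 1)) = ⟨l - 1 - (k + 1), by omega⟩ :=
      Fin.ext (by simp; omega)
    rw [h1, h2]
    exact bracket_theta l (l - 1 - k) (l - 1 - (k + 1)) (by omega) (by omega) (by omega)

/-- The right-nested iterated bracket
`[θ_{1,0}, [θ_{2,1}, [⋯, [θ_{l-1,l-2}, θ_{l,l-1}]⋯]]]` equals `θ_{l,0}`, and this is a
nonzero derivation (it sends `X_l` to `1`). -/
theorem stmt4 (l : ℕ) (hl : 1 ≤ l) :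
    rightNestedBracket
        (fun m => theta l ⟨l - m, by omega⟩ ⟨l - m - 1, by omega⟩) (l - 1)
      = theta l ⟨l, by omega⟩ 0 ∧
    theta l ⟨l, by omega⟩ 0 (X ⟨l, by omega⟩) = 1 ∧
    rightNestedBracket
        (fun m => theta l ⟨l - m, by omega⟩ ⟨l - m - 1, by omega⟩) (l - 1) ≠ 0 := by
  have h0 : (⟨l - 1 - (l - 1), by omega⟩ : Fin (l + 1)) = 0 := Fin.ext (by simp)
  have heq := key l hl (l - 1) le_rfl
  rw [h0] at heq
  refine ⟨heq, ?_, ?_⟩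
  · rw [theta_X, if_pos rfl, Pgen, if_pos rfl]
  · rw [heq]
    intro h
    have := congrArg (fun D => D (X (⟨l, by omega⟩ : Fin (l + 1)))) h
    simp only [theta_X, if_pos rfl, Pgen, Derivation.zero_apply] at this
    simp at this
end
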